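/- Let G be a finite simple graph on n vertices in which every vertex has positive degree, and let v_1, …, v_n be an orthonormal basis of ℝ^n consisting of eigenvectors of the normalized Laplacian L with L v_i = λ_i v_i. For a pair of vertices {x,y}, define the edge derivative of Kemeny's constant dK/d{x,y} := Σ_{i : λ_i ≠ 0} −(1/λ_i²)·F(v_i, λ_i, {x,y}). Then the sum of these derivatives over all edges of G is zero: Σ_{{x,y} ∈ E(G)} dK/d{x,y} = 0. -/

import Mathlib

open Finset

variable {V : Type*} [Fintype V] [DecidableEq V]

/-- The normalized Laplacian `L = I - D^{-1/2} A D^{-1/2}` of a simple graph. -/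
noncomputable def normLap (G : SimpleGraph V) [DecidableRel G.Adj] : Matrix V V ℝ :=
  fun x y =>
    if x = y then 1
    else if G.Adj x y then -(1 / Real.sqrt ((G.degree x : ℝ) * (G.degree y : ℝ)))
    else 0

/-- The Aksoy–Purvine–Young edge-derivative expression
`F(v, λ, {x,y}) = (1-λ)(v_x²/d_x + v_y²/d_y) − 2 v_x v_y / √(d_x d_y)`. -/
noncomputable def edgeDeriv (G : SimpleGraph V) [DecidableRel G.Adj]
    (v : V → ℝ) (lam : ℝ) (x y : V) : ℝ :=
  (1 - lam) * (v x ^ 2 / (G.degree x : ℝ) + v y ^ 2 / (G.degree y : ℝ))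
    - 2 * (v x * v y) / Real.sqrt ((G.degree x : ℝ) * (G.degree y : ℝ))

lemma edgeDeriv_symm (G : SimpleGraph V) [DecidableRel G.Adj] (v : V → ℝ) (lam : ℝ) :
    ∀ x y : V, edgeDeriv G v lam x y = edgeDeriv G v lam y x := by
  intro x y
  unfold edgeDeriv
  rw [mul_comm ((G.degree x : ℝ)) ((G.degree y : ℝ))]
  ring

/-- The edge-derivative expression, as a function on unordered pairs. -/
noncomputable def edgeDerivSym (G : SimpleGraph V) [DecidableRel G.Adj]
    (v : V → ℝ) (lam : ℝ) : Sym2 V → ℝ :=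
  Sym2.lift ⟨fun x y => edgeDeriv G v lam x y, edgeDeriv_symm G v lam⟩

/-- The edge derivative of Kemeny's constant with respect to the pair `{x,y}`:
`dK/d{x,y} = Σ_{i : λ_i ≠ 0} −(1/λ_i²) F(v_i, λ_i, {x,y})`. -/
noncomputable def kemenyDeriv (G : SimpleGraph V) [DecidableRel G.Adj] {n : ℕ}
    (w : Fin n → V → ℝ) (lam : Fin n → ℝ) (x y : V) : ℝ :=
  ∑ i, if lam i = 0 then 0 else -(1 / lam i ^ 2) * edgeDeriv G (w i) (lam i) x y

lemma kemenyDeriv_symm (G : SimpleGraph V) [DecidableRel G.Adj] {n : ℕ}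
    (w : Fin n → V → ℝ) (lam : Fin n → ℝ) :
    ∀ x y : V, kemenyDeriv G w lam x y = kemenyDeriv G w lam y x := by
  intro x y
  unfold kemenyDeriv
  refine Finset.sum_congr rfl fun i _ => ?_
  rw [edgeDeriv_symm G (w i) (lam i) x y]

/-- The edge derivative of Kemeny's constant, as a function on unordered pairs. -/
noncomputable def kemenyDerivSym (G : SimpleGraph V) [DecidableRel G.Adj] {n : ℕ}
    (w : Fin n → V → ℝ) (lam : Fin n → ℝ) : Sym2 V → ℝ :=
  Sym2.lift ⟨fun x y => kemenyDeriv G w lam x y, kemenyDeriv_symm G w lam⟩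

/-!
For an eigenpair `(v, λ)` of `L`, split `F(v, λ, {x,y})` into one share for each of the darts
`(x,y)` and `(y,x)`. The shares of the darts leaving a vertex `x` add up to
`(1 - λ) v_x² - v_x Σ_{y ∼ x} v_y / √(d_x d_y)`, which vanishes because the eigenvalue equation
at `x` says exactly `Σ_{y ∼ x} v_y / √(d_x d_y) = (1 - λ) v_x`. So `F(v_i, λ_i, ·)` sums to zero
over the edges for every `i`, and so does its linear combination `dK/d{x,y}`.
-/

namespace SimpleGraph

variable (G : SimpleGraph V) [DecidableRel G.Adj] {M : Type*} [AddCommMonoid M]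

theorem sum_darts_eq_sum_sum_neighborFinset (a : V → V → M) :
    ∑ d : G.Dart, a d.fst d.snd = ∑ x, ∑ y ∈ G.neighborFinset x, a x y := by
  rw [← sum_fiberwise univ (fun d : G.Dart => d.fst)]
  refine sum_congr rfl fun x _ => ?_
  rw [dart_fst_fiber, sum_image fun _ _ _ _ h => G.dartOfNeighborSet_injective x h]
  exact (sum_subtype _ (fun y => G.mem_neighborFinset x y) (a x)).symm

theorem sum_edgeFinset_eq_sum_sum_neighborFinset (f : Sym2 V → M) (a : V → V → M)
    (hf : ∀ x y, G.Adj x y → f s(x, y) = a x y + a y x) :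
    ∑ e ∈ G.edgeFinset, f e = ∑ x, ∑ y ∈ G.neighborFinset x, a x y := by
  rw [← sum_darts_eq_sum_sum_neighborFinset,
    ← sum_fiberwise_of_maps_to (g := Dart.edge) fun d _ => mem_edgeFinset.2 d.edge_mem]
  refine sum_congr rfl fun e he => ?_
  induction e using Sym2.ind with
  | _ x y =>
    let d : G.Dart := ⟨(x, y), mem_edgeFinset.1 he⟩
    rw [show s(x, y) = d.edge from rfl, d.edge_fiber, sum_pair d.symm_ne.symm]
    exact hf x y d.adj

end SimpleGraph

section

variable (G : SimpleGraph V) [DecidableRel G.Adj]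

theorem normLap_mulVec_apply (v : V → ℝ) (x : V) :
    (normLap G).mulVec v x
      = v x - ∑ y ∈ G.neighborFinset x, v y / √((G.degree x : ℝ) * G.degree y) := by
  have hterm : ∀ y, normLap G x y * v y
      = (if x = y then v y else 0)
        - (if G.Adj x y then v y / √((G.degree x : ℝ) * G.degree y) else 0) := by
    intro y
    by_cases hxy : x = y
    · subst hxy; simp [normLap]
    · by_cases hadj : G.Adj x y <;> simp [normLap, hxy, hadj, div_eq_inv_mul]
  simp only [Matrix.mulVec, dotProduct, hterm, sum_sub_distrib, sum_ite_eq, mem_univ, if_true,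
    ← sum_filter, ← G.neighborFinset_eq_filter]

end

section

variable (G : SimpleGraph V) [DecidableRel G.Adj] {v : V → ℝ} {lam : ℝ}

theorem sum_neighborFinset_div_sqrt_of_eigen (heig : (normLap G).mulVec v = lam • v) (x : V) :
    ∑ y ∈ G.neighborFinset x, v y / √((G.degree x : ℝ) * G.degree y) = (1 - lam) * v x := by
  have hx := congrFun heig x
  rw [normLap_mulVec_apply, Pi.smul_apply, smul_eq_mul] at hx
  linarith

/-- The share of `F(v, λ, {x,y})` carried by the dart `(x, y)`. -/
noncomputable def dartDeriv (v : V → ℝ) (lam : ℝ) (x y : V) : ℝ :=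
  (1 - lam) * (v x ^ 2 / G.degree x) - v x * v y / √((G.degree x : ℝ) * G.degree y)

omit [DecidableEq V] in
theorem edgeDeriv_eq_dartDeriv_add (v : V → ℝ) (lam : ℝ) (x y : V) :
    edgeDeriv G v lam x y = dartDeriv G v lam x y + dartDeriv G v lam y x := by
  simp only [edgeDeriv, dartDeriv]
  rw [mul_comm (G.degree y : ℝ)]
  ring

theorem sum_neighborFinset_dartDeriv_of_eigen (heig : (normLap G).mulVec v = lam • v) (x : V) :
    ∑ y ∈ G.neighborFinset x, dartDeriv G v lam x y = 0 := by
  have hsum := sum_neighborFinset_div_sqrt_of_eigen G heig x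
  simp only [dartDeriv, sum_sub_distrib, sum_const, G.card_neighborFinset_eq_degree, nsmul_eq_mul,
    mul_div_assoc, ← mul_sum, hsum]
  rcases eq_or_ne (G.degree x) 0 with hdeg | hdeg
  · -- an isolated vertex has `(1 - λ) v_x = 0`, read off the empty neighbour sum
    rw [← G.card_neighborFinset_eq_degree, card_eq_zero.mp hdeg, sum_empty] at hsum
    rw [hdeg]
    linear_combination v x * hsum
  · field_simp
    ring

theorem sum_edgeDerivSym_eq_zero (heig : (normLap G).mulVec v = lam • v) :
    ∑ e ∈ G.edgeFinset, edgeDerivSym G v lam e = 0 := by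
  rw [G.sum_edgeFinset_eq_sum_sum_neighborFinset _ (dartDeriv G v lam)
    fun x y _ => edgeDeriv_eq_dartDeriv_add G v lam x y]
  exact sum_eq_zero fun x _ => sum_neighborFinset_dartDeriv_of_eigen G heig x

end

theorem kemenyDerivSym_eq_sum (G : SimpleGraph V) [DecidableRel G.Adj] {n : ℕ}
    (w : Fin n → V → ℝ) (lam : Fin n → ℝ) (e : Sym2 V) :
    kemenyDerivSym G w lam e
      = ∑ i, if lam i = 0 then 0 else -(1 / lam i ^ 2) * edgeDerivSym G (w i) (lam i) e := by
  induction e using Sym2.ind with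
  | _ x y => rfl

theorem kemeny_derivatives_sum_over_edges_zero_general
    (G : SimpleGraph V) [DecidableRel G.Adj]
    (w : Fin (Fintype.card V) → V → ℝ) (lam : Fin (Fintype.card V) → ℝ)
    (heig : ∀ i, (normLap G).mulVec (w i) = lam i • w i) :
    ∑ e ∈ G.edgeFinset, kemenyDerivSym G w lam e = 0 := by
  simp_rw [kemenyDerivSym_eq_sum]
  rw [sum_comm]
  refine sum_eq_zero fun i _ => ?_
  split_ifs
  · exact sum_const_zero
  · rw [← mul_sum, sum_edgeDerivSym_eq_zero G (heig i), mul_zero]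

theorem kemeny_derivatives_sum_over_edges_zero
    (G : SimpleGraph V) [DecidableRel G.Adj]
    (hdeg : ∀ z : V, 0 < G.degree z)
    (w : Fin (Fintype.card V) → V → ℝ) (lam : Fin (Fintype.card V) → ℝ)
    (horth : ∀ i j, (∑ z, w i z * w j z) = if i = j then 1 else 0)
    (heig : ∀ i, (normLap G).mulVec (w i) = lam i • w i) :
    ∑ e ∈ G.edgeFinset, kemenyDerivSym G w lam e = 0 :=
  kemeny_derivatives_sum_over_edges_zero_general G w lam heig
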